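/- (Accuracy of the compressive dictionary update, Theorem 2.) Let (Ω, ℱ, ℙ) be a probability space and ε ∈ [0, 1], μ₁ > 0. Let ḡ : ℝ^q → ℝ be a fixed quadratic function, nonnegative on ℝ^q, with global minimizer d* ∈ ℝ^q. For each ω ∈ Ω let g_ω(d) = ½ d^T Q_ω d + f_ω^T d + c_ω be a (measurably chosen) quadratic function, nonnegative on ℝ^q, with symmetric Hessian Q_ω, let d̂(ω) be a global minimizer of g_ω, and assume d̂, ω ↦ g_ω(d*) and ω ↦ g_ω(d̂(ω)) are measurable and integrable. Assume: (i) λ_min(Q_ω) ≥ μ₁ almost surely; (ii) almost surely, (1−ε) ḡ(d̂(ω)) ≤ g_ω(d̂(ω)) ≤ (1+ε) ḡ(d̂(ω)) and (1−ε) ḡ(d*) ≤ g_ω(d*) ≤ (1+ε) ḡ(d*); (iii) 𝔼[g_ω(d*)] = ḡ(d*). Then 𝔼[ ‖d̂ − d*‖₂² ] ≤ (2ε/μ₁) ḡ(d*). -/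

import Mathlib

/-!
At the minimizer `x` of a quadratic `g` with symmetric Hessian `Q` the gradient `Q x + f`
vanishes, so `g y - g x = ½ (y - x)ᵀ Q (y - x) ≥ (λ_min(Q) / 2) ‖y - x‖²`. Applied to `g_ω` at
`d̂(ω)` and `d*`, this bounds `‖d̂ - d*‖²` by `(2 / μ₁) (g_ω(d*) - g_ω(d̂))`. In expectation,
`𝔼 g_ω(d*) = ḡ(d*)` by unbiasedness, while `g_ω(d̂) ≥ (1 - ε) ḡ(d̂) ≥ (1 - ε) ḡ(d*)` by
concentration and minimality of `d*`; so the expected gap is at most `ε ḡ(d*)`.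
-/

open Matrix MeasureTheory

noncomputable def lamMin {k : Type*} [Fintype k] (A : Matrix k k ℝ) : ℝ :=
  sInf {t : ℝ | ∃ v : k → ℝ, v ≠ 0 ∧ A.mulVec v = t • v}

noncomputable def quadObj {q : ℕ} (Q : Matrix (Fin q) (Fin q) ℝ)
    (f : Fin q → ℝ) (c : ℝ) (d : Fin q → ℝ) : ℝ :=
  (1 / 2) * (d ⬝ᵥ Q.mulVec d) + f ⬝ᵥ d + c

namespace Matrix
variable {k : Type*} [Fintype k] [DecidableEq k]

lemma lamMin_eq_sInf_spectrum (A : Matrix k k ℝ) : lamMin A = sInf (spectrum ℝ A) := by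
  rw [lamMin, ← spectrum_toLin']
  congr 1
  ext t
  rw [← Module.End.hasEigenvalue_iff_mem_spectrum, Module.End.hasEigenvalue_iff,
    Submodule.ne_bot_iff]
  simp only [Module.End.mem_eigenspace_iff, toLin'_apply]
  exact ⟨fun ⟨v, hv, hAv⟩ => ⟨v, hAv, hv⟩, fun ⟨v, hAv, hv⟩ => ⟨v, hv, hAv⟩⟩

lemma le_of_le_lamMin {A : Matrix k k ℝ} {μ : ℝ} (h : μ ≤ lamMin A) {t : ℝ}
    (ht : t ∈ spectrum ℝ A) : μ ≤ t :=
  h.trans <| lamMin_eq_sInf_spectrum A ▸ csInf_le finite_real_spectrum.bddBelow ht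

open scoped MatrixOrder in
lemma IsSymm.mul_dotProduct_self_le {A : Matrix k k ℝ} (hA : A.IsSymm) {μ : ℝ}
    (h : μ ≤ lamMin A) (v : k → ℝ) : μ * (v ⬝ᵥ v) ≤ v ⬝ᵥ A *ᵥ v := by
  have hμA : algebraMap ℝ _ μ ≤ A :=
    (algebraMap_le_iff_le_spectrum (show IsSelfAdjoint A from hA)).2 fun t => le_of_le_lamMin h
  have := (Matrix.le_iff.1 hμA).dotProduct_mulVec_nonneg v
  simpa [Algebra.algebraMap_eq_smul_one, sub_mulVec, smul_mulVec, dotProduct_smul] using this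

end Matrix

section QuadObj
variable {q : ℕ} {Q : Matrix (Fin q) (Fin q) ℝ} {f : Fin q → ℝ} {c : ℝ}

lemma quadObj_add (hQ : Q.IsSymm) (x v : Fin q → ℝ) :
    quadObj Q f c (x + v) = quadObj Q f c x + v ⬝ᵥ (Q *ᵥ x + f) + 1 / 2 * (v ⬝ᵥ Q *ᵥ v) := by
  have hsymm : x ⬝ᵥ Q *ᵥ v = v ⬝ᵥ Q *ᵥ x := by
    rw [dotProduct_mulVec, ← mulVec_transpose, hQ.eq, dotProduct_comm]
  simp only [quadObj, mulVec_add, dotProduct_add, add_dotProduct, hsymm, dotProduct_comm f]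
  ring

lemma mulVec_add_eq_zero_of_forall_le (hQ : Q.IsSymm) {x : Fin q → ℝ}
    (hx : ∀ d, quadObj Q f c x ≤ quadObj Q f c d) : Q *ᵥ x + f = 0 := by
  set w := Q *ᵥ x + f
  -- `t ↦ g (x + t • w) - g x` is a nonnegative quadratic with linear coefficient `w ⬝ᵥ w`
  have hdiscr := discrim_le_zero (a := 1 / 2 * (w ⬝ᵥ Q *ᵥ w)) (b := w ⬝ᵥ w) (c := 0) fun t => by
    have := hx (x + t • w)
    rw [quadObj_add hQ] at this
    simp only [dotProduct_smul, smul_dotProduct, mulVec_smul, smul_eq_mul] at this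
    linarith
  rw [discrim, mul_zero, sub_zero] at hdiscr
  exact dotProduct_self_eq_zero.1 (sq_nonpos_iff _ |>.1 hdiscr)

lemma quadObj_sub_quadObj_of_forall_le (hQ : Q.IsSymm) {x : Fin q → ℝ}
    (hx : ∀ d, quadObj Q f c x ≤ quadObj Q f c d) (y : Fin q → ℝ) :
    quadObj Q f c y - quadObj Q f c x = 1 / 2 * ((y - x) ⬝ᵥ Q *ᵥ (y - x)) := by
  have := quadObj_add (f := f) (c := c) hQ x (y - x)
  rw [add_sub_cancel, mulVec_add_eq_zero_of_forall_le hQ hx, dotProduct_zero] at this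
  linarith

lemma mul_sum_sq_sub_le_quadObj_sub (hQ : Q.IsSymm) {μ : ℝ} (hμ : μ ≤ lamMin Q)
    {x : Fin q → ℝ} (hx : ∀ d, quadObj Q f c x ≤ quadObj Q f c d) (y : Fin q → ℝ) :
    μ / 2 * ∑ i, (x i - y i) ^ 2 ≤ quadObj Q f c y - quadObj Q f c x := by
  have hsum : ∑ i, (x i - y i) ^ 2 = (y - x) ⬝ᵥ (y - x) := by
    simp only [dotProduct, Pi.sub_apply, ← sq, ← neg_sub (x _), neg_sq]
  rw [quadObj_sub_quadObj_of_forall_le hQ hx, hsum]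
  linarith [hQ.mul_dotProduct_self_le hμ (y - x)]

end QuadObj

theorem compressive_update_accuracy_general
    {Ω : Type*} [MeasurableSpace Ω] (P : Measure Ω) [IsProbabilityMeasure P]
    (q : ℕ) (ε μ₁ : ℝ) (hε1 : ε ≤ 1) (hμ₁ : 0 < μ₁)
    -- the fixed full-data quadratic objective `ḡ` and its minimizer `d*`
    (Qb : Matrix (Fin q) (Fin q) ℝ) (fb : Fin q → ℝ) (cb : ℝ) (dstar : Fin q → ℝ)
    (hgb_min : ∀ d, quadObj Qb fb cb dstar ≤ quadObj Qb fb cb d)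
    -- the random compressive quadratic objective `g_ω` and its minimizer `d̂(ω)`
    (Q : Ω → Matrix (Fin q) (Fin q) ℝ) (f : Ω → Fin q → ℝ) (c : Ω → ℝ)
    (hQsymm : ∀ ω, (Q ω).IsSymm)
    (dhat : Ω → Fin q → ℝ)
    (hg_min : ∀ ω d, quadObj (Q ω) (f ω) (c ω) (dhat ω) ≤ quadObj (Q ω) (f ω) (c ω) d)
    -- measurability and integrability
    (hint_star : Integrable (fun ω => quadObj (Q ω) (f ω) (c ω) dstar) P)
    (hint_hat : Integrable (fun ω => quadObj (Q ω) (f ω) (c ω) (dhat ω)) P)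
    -- (i) eigenvalue lower bound
    (heig : ∀ᵐ ω ∂P, μ₁ ≤ lamMin (Q ω))
    -- (ii) multiplicative concentration at `d̂(ω)` and at `d*`
    (hsand : ∀ᵐ ω ∂P,
      ((1 - ε) * quadObj Qb fb cb (dhat ω) ≤ quadObj (Q ω) (f ω) (c ω) (dhat ω) ∧
        quadObj (Q ω) (f ω) (c ω) (dhat ω) ≤ (1 + ε) * quadObj Qb fb cb (dhat ω)) ∧
      ((1 - ε) * quadObj Qb fb cb dstar ≤ quadObj (Q ω) (f ω) (c ω) dstar ∧
        quadObj (Q ω) (f ω) (c ω) dstar ≤ (1 + ε) * quadObj Qb fb cb dstar))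
    -- (iii) unbiasedness at `d*`
    (hunbias : ∫ ω, quadObj (Q ω) (f ω) (c ω) dstar ∂P = quadObj Qb fb cb dstar) :
    ∫ ω, ∑ i, (dhat ω i - dstar i) ^ 2 ∂P ≤ (2 * ε / μ₁) * quadObj Qb fb cb dstar := by
  have hpointwise : ∀ᵐ ω ∂P, ∑ i, (dhat ω i - dstar i) ^ 2 ≤
      2 / μ₁ * (quadObj (Q ω) (f ω) (c ω) dstar - quadObj (Q ω) (f ω) (c ω) (dhat ω)) := by
    filter_upwards [heig] with ω hω
    rw [div_mul_eq_mul_div, le_div_iff₀' hμ₁]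
    linarith [mul_sum_sq_sub_le_quadObj_sub (hQsymm ω) hω (hg_min ω) dstar]
  have hlower : ∀ᵐ ω ∂P,
      (1 - ε) * quadObj Qb fb cb dstar ≤ quadObj (Q ω) (f ω) (c ω) (dhat ω) := by
    filter_upwards [hsand] with ω hω
    exact (mul_le_mul_of_nonneg_left (hgb_min _) (sub_nonneg.2 hε1)).trans hω.1.1
  have hgap : ∫ ω, quadObj (Q ω) (f ω) (c ω) dstar - quadObj (Q ω) (f ω) (c ω) (dhat ω) ∂P
      ≤ ε * quadObj Qb fb cb dstar := by
    have := integral_mono_ae (integrable_const _) hint_hat hlower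
    rw [integral_sub hint_star hint_hat, hunbias]
    simp only [integral_const, probReal_univ, one_smul] at this
    linarith
  calc ∫ ω, ∑ i, (dhat ω i - dstar i) ^ 2 ∂P
      ≤ ∫ ω, 2 / μ₁ * (quadObj (Q ω) (f ω) (c ω) dstar - quadObj (Q ω) (f ω) (c ω) (dhat ω)) ∂P :=
        integral_mono_of_nonneg (ae_of_all _ fun ω => by positivity)
          ((hint_star.sub hint_hat).const_mul _) hpointwise
    _ = 2 / μ₁ * ∫ ω, quadObj (Q ω) (f ω) (c ω) dstar - quadObj (Q ω) (f ω) (c ω) (dhat ω) ∂P :=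
        integral_const_mul _ _
    _ ≤ 2 / μ₁ * (ε * quadObj Qb fb cb dstar) := by gcongr
    _ = 2 * ε / μ₁ * quadObj Qb fb cb dstar := by ring

/-- Accuracy of the compressive dictionary update (Theorem 2):
`𝔼 ‖d̂ - d*‖₂² ≤ (2ε/μ₁) ḡ(d*)`. -/
theorem compressive_update_accuracy
    {Ω : Type*} [MeasurableSpace Ω] (P : Measure Ω) [IsProbabilityMeasure P]
    (q : ℕ) (ε μ₁ : ℝ) (hε0 : 0 ≤ ε) (hε1 : ε ≤ 1) (hμ₁ : 0 < μ₁)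
    -- the fixed full-data quadratic objective `ḡ` and its minimizer `d*`
    (Qb : Matrix (Fin q) (Fin q) ℝ) (fb : Fin q → ℝ) (cb : ℝ) (dstar : Fin q → ℝ)
    (hgb_nonneg : ∀ d, 0 ≤ quadObj Qb fb cb d)
    (hgb_min : ∀ d, quadObj Qb fb cb dstar ≤ quadObj Qb fb cb d)
    -- the random compressive quadratic objective `g_ω` and its minimizer `d̂(ω)`
    (Q : Ω → Matrix (Fin q) (Fin q) ℝ) (f : Ω → Fin q → ℝ) (c : Ω → ℝ)
    (hQsymm : ∀ ω, (Q ω).IsSymm)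
    (hQmeas : ∀ i j, Measurable fun ω => Q ω i j)
    (hfmeas : Measurable f) (hcmeas : Measurable c)
    (hg_nonneg : ∀ ω d, 0 ≤ quadObj (Q ω) (f ω) (c ω) d)
    (dhat : Ω → Fin q → ℝ)
    (hg_min : ∀ ω d, quadObj (Q ω) (f ω) (c ω) (dhat ω) ≤ quadObj (Q ω) (f ω) (c ω) d)
    -- measurability and integrability
    (hdhat_meas : Measurable dhat)
    (hdhat_int : Integrable dhat P)
    (hint_star : Integrable (fun ω => quadObj (Q ω) (f ω) (c ω) dstar) P)
    (hint_hat : Integrable (fun ω => quadObj (Q ω) (f ω) (c ω) (dhat ω)) P)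
    -- (i) eigenvalue lower bound
    (heig : ∀ᵐ ω ∂P, μ₁ ≤ lamMin (Q ω))
    -- (ii) multiplicative concentration at `d̂(ω)` and at `d*`
    (hsand : ∀ᵐ ω ∂P,
      ((1 - ε) * quadObj Qb fb cb (dhat ω) ≤ quadObj (Q ω) (f ω) (c ω) (dhat ω) ∧
        quadObj (Q ω) (f ω) (c ω) (dhat ω) ≤ (1 + ε) * quadObj Qb fb cb (dhat ω)) ∧
      ((1 - ε) * quadObj Qb fb cb dstar ≤ quadObj (Q ω) (f ω) (c ω) dstar ∧
        quadObj (Q ω) (f ω) (c ω) dstar ≤ (1 + ε) * quadObj Qb fb cb dstar))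
    -- (iii) unbiasedness at `d*`
    (hunbias : ∫ ω, quadObj (Q ω) (f ω) (c ω) dstar ∂P = quadObj Qb fb cb dstar) :
    ∫ ω, ∑ i, (dhat ω i - dstar i) ^ 2 ∂P ≤ (2 * ε / μ₁) * quadObj Qb fb cb dstar :=
  compressive_update_accuracy_general P q ε μ₁ hε1 hμ₁ Qb fb cb dstar hgb_min Q f c hQsymm dhat
    hg_min hint_star hint_hat heig hsand hunbias
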